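/- Let g be a smooth complex-valued function on the unit disk with g_{zz̄} = 0 (g harmonic), let λ_1,…,λ_p be complex constants with B(z) = Σ_{k=1}^p λ_k|z|^{2(k−1)} ≠ 0 for z ≠ 0, and suppose L[g](z) = z g_z − z̄ g_{z̄} ≠ 0 for z ≠ 0. Let u(z) = B(z)·g(z). Then for z = re^{it} in the punctured disk, Re( (−∂²u/∂t²)/(L[u](z)) ) = Re( (𝔏[g](z) − 2|z|² g_{zz̄}(z) + z² g_{zz}(z) + z̄² g_{z̄z̄}(z)) / L[g](z) ), i.e., the convexity quantity Im( (∂²u/∂t²)/(∂u/∂t) ) equals the corresponding quantity for g. Consequently, if both u and g are univalent, the curve u(re^{it}) is convex for every 0 < r < 1 if and only if g(re^{it}) is convex for every 0 < r < 1. -/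

import Mathlib

open Complex Finset Metric

/-- Wirtinger derivative ∂/∂z. -/
noncomputable def wz (f : ℂ → ℂ) (z : ℂ) : ℂ :=
  (fderiv ℝ f z 1 - Complex.I * fderiv ℝ f z Complex.I) / 2

/-- Wirtinger derivative ∂/∂z̄. -/
noncomputable def wzb (f : ℂ → ℂ) (z : ℂ) : ℂ :=
  (fderiv ℝ f z 1 + Complex.I * fderiv ℝ f z Complex.I) / 2

/-- The operator L[f] = z f_z − z̄ f_{z̄}. -/
noncomputable def Lop (f : ℂ → ℂ) : ℂ → ℂ :=
  fun z => z * wz f z - (starRingEnd ℂ) z * wzb f z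

/-- The operator 𝔏[f] = z f_z + z̄ f_{z̄}. -/
noncomputable def Lfrak (f : ℂ → ℂ) : ℂ → ℂ :=
  fun z => z * wz f z + (starRingEnd ℂ) z * wzb f z

/-- The Jacobian J_f = |f_z|² − |f_{z̄}|². -/
noncomputable def Jac (f : ℂ → ℂ) (z : ℂ) : ℝ :=
  ‖wz f z‖ ^ 2 - ‖wzb f z‖ ^ 2

/-! ### Auxiliary lemmas -/

lemma fderiv_decomp (f : ℂ → ℂ) {z : ℂ} (v : ℂ) :
    fderiv ℝ f z v = wz f z * v + wzb f z * (starRingEnd ℂ) v := by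
  have hv : v = (v.re : ℝ) • (1 : ℂ) + (v.im : ℝ) • Complex.I := by
    simp [Complex.ext_iff]
  have hT : fderiv ℝ f z v = (v.re : ℂ) * fderiv ℝ f z 1 + (v.im : ℂ) * fderiv ℝ f z Complex.I := by
    conv_lhs => rw [hv]
    rw [map_add, map_smul, map_smul]
    simp [Complex.real_smul]
  rw [hT]
  simp only [wz, wzb]
  have hvv : v = (v.re : ℂ) + (v.im : ℂ) * Complex.I := (Complex.re_add_im v).symm
  have hcv : (starRingEnd ℂ) v = (v.re : ℂ) - (v.im : ℂ) * Complex.I := by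
    simp [Complex.ext_iff]
  set a := fderiv ℝ f z 1
  set b := fderiv ℝ f z Complex.I
  linear_combination (-(a - Complex.I*b)/2) * hvv + (-(a + Complex.I*b)/2) * hcv
    + ((v.im : ℂ) * b) * Complex.I_sq

lemma hasDerivAt_circ (r s : ℝ) :
    HasDerivAt (fun s : ℝ => (r : ℂ) * Complex.exp (Complex.I * s))
      (Complex.I * ((r : ℂ) * Complex.exp (Complex.I * s))) s := by
  have h := hasDerivAt_circleMap (0 : ℂ) r s
  have he : (fun s : ℝ => (r : ℂ) * Complex.exp (Complex.I * s)) = circleMap 0 r := by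
    funext x; simp [circleMap, mul_comm]
  rw [he]
  convert h using 1
  simp [circleMap, mul_comm]

lemma hasDerivAt_curve (f : ℂ → ℂ) {r s : ℝ}
    (hf : DifferentiableAt ℝ f ((r : ℂ) * Complex.exp (Complex.I * s))) :
    HasDerivAt (fun s : ℝ => f ((r : ℂ) * Complex.exp (Complex.I * s)))
      (Complex.I * Lop f ((r : ℂ) * Complex.exp (Complex.I * s))) s := by
  have h := hf.hasFDerivAt.comp_hasDerivAt s (hasDerivAt_circ r s)
  refine h.congr_deriv ?_
  rw [fderiv_decomp]
  set z0 := (r : ℂ) * Complex.exp (Complex.I * s)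
  simp only [Lop, map_mul, Complex.conj_I]
  ring

lemma hasFDerivAt_fderiv_apply (f : ℂ → ℂ) {z : ℂ}
    (hD : DifferentiableAt ℝ (fderiv ℝ f) z) (v : ℂ) :
    HasFDerivAt (fun w => fderiv ℝ f w v)
      ((ContinuousLinearMap.apply ℝ ℂ v).comp (fderiv ℝ (fderiv ℝ f) z)) z :=
  (ContinuousLinearMap.apply ℝ ℂ v).hasFDerivAt.comp z hD.hasFDerivAt

lemma hasFDerivAt_wz (f : ℂ → ℂ) {z : ℂ}
    (hD : DifferentiableAt ℝ (fderiv ℝ f) z) :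
    HasFDerivAt (wz f)
      (((2:ℂ)⁻¹) • (((ContinuousLinearMap.apply ℝ ℂ 1).comp (fderiv ℝ (fderiv ℝ f) z))
        - Complex.I • ((ContinuousLinearMap.apply ℝ ℂ Complex.I).comp (fderiv ℝ (fderiv ℝ f) z)))) z := by
  have h1 := hasFDerivAt_fderiv_apply f hD 1
  have hi := (hasFDerivAt_fderiv_apply f hD Complex.I).const_mul Complex.I
  have h := (h1.sub hi).const_mul ((2:ℂ)⁻¹)
  have hfun : wz f = fun w => (2:ℂ)⁻¹ * (fderiv ℝ f w 1 - Complex.I * fderiv ℝ f w Complex.I) := by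
    funext w; rw [wz, div_eq_inv_mul]
  rw [hfun]; exact h

lemma hasFDerivAt_wzb (f : ℂ → ℂ) {z : ℂ}
    (hD : DifferentiableAt ℝ (fderiv ℝ f) z) :
    HasFDerivAt (wzb f)
      (((2:ℂ)⁻¹) • (((ContinuousLinearMap.apply ℝ ℂ 1).comp (fderiv ℝ (fderiv ℝ f) z))
        + Complex.I • ((ContinuousLinearMap.apply ℝ ℂ Complex.I).comp (fderiv ℝ (fderiv ℝ f) z)))) z := by
  have h1 := hasFDerivAt_fderiv_apply f hD 1
  have hi := (hasFDerivAt_fderiv_apply f hD Complex.I).const_mul Complex.I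
  have h := (h1.add hi).const_mul ((2:ℂ)⁻¹)
  have hfun : wzb f = fun w => (2:ℂ)⁻¹ * (fderiv ℝ f w 1 + Complex.I * fderiv ℝ f w Complex.I) := by
    funext w; rw [wzb, div_eq_inv_mul]
  rw [hfun]; exact h

lemma wz_wzb_symm (f : ℂ → ℂ) {z : ℂ}
    (hf : ∀ᶠ y in nhds z, DifferentiableAt ℝ f y)
    (hD : DifferentiableAt ℝ (fderiv ℝ f) z) :
    wzb (wz f) z = wz (wzb f) z := by
  have hsymm := second_derivative_symmetric_of_eventually
    (f' := fderiv ℝ f) (f'' := fderiv ℝ (fderiv ℝ f) z)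
    (hf.mono fun y hy => hy.hasFDerivAt) hD.hasFDerivAt
  have e1 := (hasFDerivAt_wz f hD).fderiv
  have e2 := (hasFDerivAt_wzb f hD).fderiv
  rw [wzb, wz, e1, e2]
  simp only [ContinuousLinearMap.smul_apply, ContinuousLinearMap.sub_apply,
    ContinuousLinearMap.add_apply, ContinuousLinearMap.comp_apply,
    ContinuousLinearMap.apply_apply, smul_eq_mul]
  rw [hsymm 1 Complex.I]
  ring

lemma circ_mem_ball {r : ℝ} (hr0 : 0 < r) (hr1 : r < 1) (s : ℝ) :
    (r : ℂ) * Complex.exp (Complex.I * s) ∈ ball (0 : ℂ) 1 := by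
  have h1 : ‖Complex.exp (Complex.I * s)‖ = 1 := by
    rw [Complex.norm_exp]; simp [Complex.mul_re]
  simp only [mem_ball, dist_zero_right, norm_mul, Complex.norm_real, Real.norm_eq_abs,
    _root_.abs_of_pos hr0, h1, mul_one]
  exact hr1

lemma second_deriv_curve (f : ℂ → ℂ)
    (hf : ContDiffOn ℝ (⊤ : ℕ∞) f (ball (0:ℂ) 1)) {r : ℝ} (hr0 : 0 < r) (hr1 : r < 1) (t : ℝ) :
    HasDerivAt (deriv (fun s : ℝ => f ((r : ℂ) * Complex.exp (Complex.I * s))))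
      (-(Lfrak f ((r : ℂ) * Complex.exp (Complex.I * t))
        + ((r : ℂ) * Complex.exp (Complex.I * t))^2 * wz (wz f) ((r : ℂ) * Complex.exp (Complex.I * t))
        + ((starRingEnd ℂ) ((r : ℂ) * Complex.exp (Complex.I * t)))^2
            * wzb (wzb f) ((r : ℂ) * Complex.exp (Complex.I * t))
        - ((r : ℂ) * Complex.exp (Complex.I * t))
            * (starRingEnd ℂ) ((r : ℂ) * Complex.exp (Complex.I * t))
            * (wzb (wz f) ((r : ℂ) * Complex.exp (Complex.I * t))
               + wz (wzb f) ((r : ℂ) * Complex.exp (Complex.I * t))))) t := by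
  set z : ℝ → ℂ := fun s => (r : ℂ) * Complex.exp (Complex.I * s) with hz
  have hmem : ∀ s : ℝ, z s ∈ ball (0 : ℂ) 1 := circ_mem_ball hr0 hr1
  have hopen : ∀ s : ℝ, ball (0:ℂ) 1 ∈ nhds (z s) := fun s => isOpen_ball.mem_nhds (hmem s)
  have hdiffOn : ∀ y ∈ ball (0:ℂ) 1, DifferentiableAt ℝ f y := fun y hy =>
    ((hf.differentiableOn (by norm_num)).differentiableAt (isOpen_ball.mem_nhds hy))
  have hdiff : ∀ s : ℝ, DifferentiableAt ℝ f (z s) := fun s => hdiffOn _ (hmem s)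
  have hderiv1 : deriv (fun s : ℝ => f (z s))
      = fun s => Complex.I * (z s * wz f (z s) - (starRingEnd ℂ) (z s) * wzb f (z s)) := by
    funext s
    exact (hasDerivAt_curve f (hdiff s)).deriv
  rw [hderiv1]
  set z0 := z t with hz0
  have hCD : ContDiffAt ℝ (⊤ : ℕ∞) f z0 := hf.contDiffAt (hopen t)
  have hD : DifferentiableAt ℝ (fderiv ℝ f) z0 :=
    (hCD.fderiv_right (m := 1) (by exact WithTop.coe_le_coe.mpr le_top)).differentiableAt one_ne_zero
  have hwzD : DifferentiableAt ℝ (wz f) z0 := (hasFDerivAt_wz f hD).differentiableAt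
  have hwzbD : DifferentiableAt ℝ (wzb f) z0 := (hasFDerivAt_wzb f hD).differentiableAt
  have hzd : HasDerivAt z (Complex.I * z0) t := hasDerivAt_circ r t
  have hzcd : HasDerivAt (fun s => (starRingEnd ℂ) (z s))
      ((starRingEnd ℂ) (Complex.I * z0)) t := by
    have := (Complex.conjCLE.toContinuousLinearMap.hasFDerivAt (x := z0)).comp_hasDerivAt t hzd
    exact this
  have hwzc : HasDerivAt (fun s => wz f (z s)) (fderiv ℝ (wz f) z0 (Complex.I * z0)) t :=
    by have := hwzD.hasFDerivAt.comp_hasDerivAt t hzd; exact this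
  have hwzbc : HasDerivAt (fun s => wzb f (z s)) (fderiv ℝ (wzb f) z0 (Complex.I * z0)) t :=
    by have := hwzbD.hasFDerivAt.comp_hasDerivAt t hzd; exact this
  have H := (((hzd.mul hwzc).sub (hzcd.mul hwzbc)).const_mul Complex.I)
  refine H.congr_deriv (Eq.symm ?_)
  rw [← hz0, fderiv_decomp (wz f), fderiv_decomp (wzb f)]
  simp only [Lfrak]
  have hci : (starRingEnd ℂ) (Complex.I * z0) = -Complex.I * (starRingEnd ℂ) z0 := by
    rw [map_mul, Complex.conj_I]
  rw [hci]
  set a := wz f z0; set b := wzb f z0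
  set P := wz (wz f) z0; set Q := wzb (wz f) z0
  set R := wz (wzb f) z0; set S := wzb (wzb f) z0
  set w := (starRingEnd ℂ) z0
  linear_combination (-(z0 * a + w * b + z0^2 * P + w^2 * S - z0*w*Q - z0*w*R)) * Complex.I_sq

lemma abs_circ {r : ℝ} (hr0 : 0 ≤ r) (s : ℝ) :
    ‖(r : ℂ) * Complex.exp (Complex.I * s)‖ = r := by
  rw [norm_mul, Complex.norm_of_nonneg hr0, Complex.norm_exp]
  simp [Complex.mul_re]

lemma habs_pow (w : ℂ) (k : ℕ) :
    ((‖w‖ : ℂ)) ^ (2 * k) = (w * (starRingEnd ℂ) w) ^ k := by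
  rw [pow_mul, ← Complex.ofReal_pow, Complex.sq_norm, Complex.mul_conj]

lemma Bdiff (p : ℕ) (lam : ℕ → ℂ) (w : ℂ) :
    DifferentiableAt ℝ (fun w => ∑ k ∈ Finset.range p, lam k * ((‖w‖ : ℂ)) ^ (2 * k)) w := by
  have hc : Differentiable ℝ (fun w : ℂ => (starRingEnd ℂ) w) := by
    have := Complex.conjCLE.differentiable
    exact this
  have he : (fun w => ∑ k ∈ Finset.range p, lam k * ((‖w‖ : ℂ)) ^ (2 * k))
      = fun w => ∑ k ∈ Finset.range p, lam k * (w * (starRingEnd ℂ) w) ^ k := by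
    funext w; exact Finset.sum_congr rfl fun k _ => by rw [habs_pow]
  rw [he]
  apply DifferentiableAt.fun_sum
  intro k _
  exact ((differentiableAt_id.mul (hc w)).pow k).const_mul _

/-- Theorem 2.8 of the paper: for u = B·g with g harmonic, B(z) = Σ λ_k|z|^{2k} ≠ 0
and L[g] ≠ 0 on the punctured disk, the convexity quantity of u along circles equals
that of g; consequently (u, g univalent) u(re^{it}) is convex for every 0 < r < 1
iff g(re^{it}) is. -/
theorem stmt13 (p : ℕ) (lam : ℕ → ℂ) (g u : ℂ → ℂ)
    (hg : ContDiffOn ℝ (⊤ : ℕ∞) g (Metric.ball (0 : ℂ) 1))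
    (hharm : ∀ z ∈ Metric.ball (0 : ℂ) 1, wz (wzb g) z = 0)
    (hB : ∀ z ∈ Metric.ball (0 : ℂ) 1 \ {0},
      (∑ k ∈ Finset.range p, lam k * ((‖z‖ : ℂ)) ^ (2 * k)) ≠ 0)
    (hLg : ∀ z ∈ Metric.ball (0 : ℂ) 1 \ {0}, Lop g z ≠ 0)
    (hu : ∀ w, u w = (∑ k ∈ Finset.range p, lam k * ((‖w‖ : ℂ)) ^ (2 * k)) * g w)
    (huinj : Set.InjOn u (Metric.ball (0 : ℂ) 1))
    (hginj : Set.InjOn g (Metric.ball (0 : ℂ) 1)) :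
    (∀ r t : ℝ, 0 < r → r < 1 →
      ((-(deriv (deriv (fun s : ℝ => u ((r : ℂ) * Complex.exp (Complex.I * s)))) t))
          / Lop u ((r : ℂ) * Complex.exp (Complex.I * t))).re
        = ((Lfrak g ((r : ℂ) * Complex.exp (Complex.I * t))
            - 2 * ((‖(r : ℂ) * Complex.exp (Complex.I * t)‖ : ℂ)) ^ 2
                * wz (wzb g) ((r : ℂ) * Complex.exp (Complex.I * t))
            + ((r : ℂ) * Complex.exp (Complex.I * t)) ^ 2
                * wz (wz g) ((r : ℂ) * Complex.exp (Complex.I * t))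
            + ((starRingEnd ℂ) ((r : ℂ) * Complex.exp (Complex.I * t))) ^ 2
                * wzb (wzb g) ((r : ℂ) * Complex.exp (Complex.I * t)))
          / Lop g ((r : ℂ) * Complex.exp (Complex.I * t))).re) ∧
    ((∀ r t : ℝ, 0 < r → r < 1 →
        0 < ((-(deriv (deriv (fun s : ℝ => u ((r : ℂ) * Complex.exp (Complex.I * s)))) t))
          / Lop u ((r : ℂ) * Complex.exp (Complex.I * t))).re) ↔
      (∀ r t : ℝ, 0 < r → r < 1 →
        0 < ((-(deriv (deriv (fun s : ℝ => g ((r : ℂ) * Complex.exp (Complex.I * s)))) t))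
          / Lop g ((r : ℂ) * Complex.exp (Complex.I * t))).re)) := by
  set B : ℂ → ℂ := fun w => ∑ k ∈ Finset.range p, lam k * ((‖w‖ : ℂ)) ^ (2 * k)
    with hBdef
  have hgdiffOn : ∀ y ∈ ball (0:ℂ) 1, DifferentiableAt ℝ g y := fun y hy =>
    ((hg.differentiableOn (by norm_num)).differentiableAt (isOpen_ball.mem_nhds hy))
  -- the complex-valued equality of convexity quotients for u and g
  have key : ∀ r t : ℝ, 0 < r → r < 1 →
      (-(deriv (deriv (fun s : ℝ => u ((r : ℂ) * Complex.exp (Complex.I * s)))) t))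
          / Lop u ((r : ℂ) * Complex.exp (Complex.I * t))
        = (-(deriv (deriv (fun s : ℝ => g ((r : ℂ) * Complex.exp (Complex.I * s)))) t))
          / Lop g ((r : ℂ) * Complex.exp (Complex.I * t)) := by
    intro r t hr0 hr1
    set z0 := (r : ℂ) * Complex.exp (Complex.I * t) with hz0
    have hmem : ∀ s : ℝ, (r : ℂ) * Complex.exp (Complex.I * s) ∈ ball (0:ℂ) 1 :=
      circ_mem_ball hr0 hr1
    have hz0mem : z0 ∈ ball (0:ℂ) 1 \ {0} := by
      refine ⟨hmem t, ?_⟩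
      simp only [Set.mem_singleton_iff, hz0]
      exact mul_ne_zero (Complex.ofReal_ne_zero.2 hr0.ne') (Complex.exp_ne_zero _)
    set c := B z0 with hc
    have hcne : c ≠ 0 := hB z0 hz0mem
    have hLgne : Lop g z0 ≠ 0 := hLg z0 hz0mem
    have hBconst : ∀ s : ℝ, B ((r : ℂ) * Complex.exp (Complex.I * s)) = c := by
      intro s
      simp only [hBdef, hc]
      refine Finset.sum_congr rfl fun k _ => ?_
      rw [abs_circ hr0.le, abs_circ hr0.le]
    have hu_curve : (fun s : ℝ => u ((r : ℂ) * Complex.exp (Complex.I * s)))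
        = fun s : ℝ => c * g ((r : ℂ) * Complex.exp (Complex.I * s)) := by
      funext s
      rw [hu, ← hBconst s]
    have hgdiff : ∀ s : ℝ, DifferentiableAt ℝ g ((r : ℂ) * Complex.exp (Complex.I * s)) :=
      fun s => hgdiffOn _ (hmem s)
    have hudiff : ∀ s : ℝ, DifferentiableAt ℝ u ((r : ℂ) * Complex.exp (Complex.I * s)) := by
      intro s
      have heu : u = fun w => B w * g w := by funext w; exact hu w
      rw [heu]
      exact (Bdiff p lam _).mul (hgdiff s)
    -- Lop u z0 = c * Lop g z0
    have h1 : HasDerivAt (fun s : ℝ => u ((r : ℂ) * Complex.exp (Complex.I * s)))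
        (Complex.I * Lop u z0) t := hasDerivAt_curve u (hudiff t)
    have h2 : HasDerivAt (fun s : ℝ => u ((r : ℂ) * Complex.exp (Complex.I * s)))
        (c * (Complex.I * Lop g z0)) t := by
      rw [hu_curve]
      exact (hasDerivAt_curve g (hgdiff t)).const_mul c
    have hLu : Lop u z0 = c * Lop g z0 := by
      have h3 : Complex.I * Lop u z0 = c * (Complex.I * Lop g z0) := h1.unique h2
      apply mul_left_cancel₀ Complex.I_ne_zero
      rw [h3]; ring
    -- second derivatives
    have e2 : deriv (fun s : ℝ => g ((r : ℂ) * Complex.exp (Complex.I * s)))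
        = fun s : ℝ => Complex.I * Lop g ((r : ℂ) * Complex.exp (Complex.I * s)) :=
      funext fun s => (hasDerivAt_curve g (hgdiff s)).deriv
    have hV := second_deriv_curve g hg hr0 hr1 t
    have hV' : HasDerivAt (fun s : ℝ => Complex.I * Lop g ((r : ℂ) * Complex.exp (Complex.I * s)))
        (-(Lfrak g z0 + z0^2 * wz (wz g) z0
          + ((starRingEnd ℂ) z0)^2 * wzb (wzb g) z0
          - z0 * (starRingEnd ℂ) z0 * (wzb (wz g) z0 + wz (wzb g) z0))) t := by
      rw [← e2]; exact hV
    have e1 : deriv (fun s : ℝ => u ((r : ℂ) * Complex.exp (Complex.I * s)))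
        = fun s : ℝ => c * (Complex.I * Lop g ((r : ℂ) * Complex.exp (Complex.I * s))) := by
      funext s
      rw [hu_curve]
      exact ((hasDerivAt_curve g (hgdiff s)).const_mul c).deriv
    have hU : deriv (deriv (fun s : ℝ => u ((r : ℂ) * Complex.exp (Complex.I * s)))) t
        = c * deriv (deriv (fun s : ℝ => g ((r : ℂ) * Complex.exp (Complex.I * s)))) t := by
      rw [e1, hV.deriv, (hV'.const_mul c).deriv]
    rw [hU, hLu, ← mul_neg]
    exact mul_div_mul_left _ _ hcne
  -- the complex-valued identity for g
  have key2 : ∀ r t : ℝ, 0 < r → r < 1 →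
      (-(deriv (deriv (fun s : ℝ => g ((r : ℂ) * Complex.exp (Complex.I * s)))) t))
          / Lop g ((r : ℂ) * Complex.exp (Complex.I * t))
        = (Lfrak g ((r : ℂ) * Complex.exp (Complex.I * t))
            - 2 * ((‖(r : ℂ) * Complex.exp (Complex.I * t)‖ : ℂ)) ^ 2
                * wz (wzb g) ((r : ℂ) * Complex.exp (Complex.I * t))
            + ((r : ℂ) * Complex.exp (Complex.I * t)) ^ 2
                * wz (wz g) ((r : ℂ) * Complex.exp (Complex.I * t))
            + ((starRingEnd ℂ) ((r : ℂ) * Complex.exp (Complex.I * t))) ^ 2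
                * wzb (wzb g) ((r : ℂ) * Complex.exp (Complex.I * t)))
          / Lop g ((r : ℂ) * Complex.exp (Complex.I * t)) := by
    intro r t hr0 hr1
    set z0 := (r : ℂ) * Complex.exp (Complex.I * t) with hz0
    have hmem : z0 ∈ ball (0:ℂ) 1 := circ_mem_ball hr0 hr1 t
    have hV := second_deriv_curve g hg hr0 hr1 t
    rw [hV.deriv]
    congr 1
    have hharm0 : wz (wzb g) z0 = 0 := hharm z0 hmem
    have hCD : ContDiffAt ℝ (⊤ : ℕ∞) g z0 := hg.contDiffAt (isOpen_ball.mem_nhds hmem)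
    have hD : DifferentiableAt ℝ (fderiv ℝ g) z0 :=
      (hCD.fderiv_right (m := 1) (by exact WithTop.coe_le_coe.mpr le_top)).differentiableAt one_ne_zero
    have hev : ∀ᶠ y in nhds z0, DifferentiableAt ℝ g y :=
      Filter.eventually_of_mem (isOpen_ball.mem_nhds hmem) (fun y hy => hgdiffOn y hy)
    have hsym : wzb (wz g) z0 = wz (wzb g) z0 := wz_wzb_symm g hev hD
    rw [hsym, hharm0]
    ring
  refine ⟨fun r t hr0 hr1 => by rw [key r t hr0 hr1, key2 r t hr0 hr1], ?_⟩
  constructor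
  · intro H r t hr0 hr1
    have := H r t hr0 hr1
    rwa [key r t hr0 hr1] at this
  · intro H r t hr0 hr1
    have := H r t hr0 hr1
    rwa [← key r t hr0 hr1] at this
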